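/- Let p be a prime and G a finite group of characteristic p, i.e. C_G(O_p(G)) ≤ O_p(G). Then for every nontrivial p-subgroup P of G, the normalizer N_G(P) is again of characteristic p. -/

import Mathlib

/-- `P` is the largest normal `p`-subgroup `O_p(G)` of `G`. -/
def IsPCore (p : ℕ) {G : Type*} [Group G] (P : Subgroup G) : Prop :=
  P.Normal ∧ IsPGroup p ↥P ∧ ∀ Q : Subgroup G, Q.Normal → IsPGroup p ↥Q → Q ≤ P

/-!
Let `H = N_G(P)`, `R = O_p(H)`, `Q = O_p(G)` and `S = QR`, a `p`-subgroup normalized by `H`.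
Since `P ≤ R`, `C_G(R) ≤ H`, so `C_S(R)` is a normal `p`-subgroup of `H` and lies in `R`.
Let `x` be a `p'`-element of `C_H(R)`. Whenever `x` centralizes some `T ≤ S` with
`C_S(T) ≤ T`, for `n ∈ N_S(T)` the commutator `⁅x, n⁆` lies in `C_S(T) ≤ T`, so it
commutes with `x`, and coprimality forces `⁅x, n⁆ = 1`. Climbing the normalizer chain of
`R` in the `p`-group `S` shows that `x` centralizes `S ≥ Q`, so `x ∈ Q` is a `p`-element
and `x = 1`. Hence `C_H(R)` is a normal `p`-subgroup of `H`, contained in `R`.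
-/

open Subgroup
open scoped commutatorElement

section CoprimeAction

variable {G : Type*} [Group G] {p : ℕ}

theorem eq_one_of_coprime_orderOf {g : G} {k : ℕ} (hg : (orderOf g).Coprime p)
    (hk : g ^ p ^ k = 1) : g = 1 :=
  orderOf_eq_one_iff.mp <|
    Nat.eq_one_of_dvd_coprimes (hg.pow_right k) dvd_rfl (orderOf_dvd_of_pow_eq_one hk)

theorem commute_of_commute_commutatorElement {x n : G} {k : ℕ} (hx : (orderOf x).Coprime p)
    (hd : ⁅x, n⁆ ^ p ^ k = 1) (hxd : Commute x ⁅x, n⁆) : Commute x n := by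
  have hpow : ∀ m : ℕ, x ^ m * n * (x ^ m)⁻¹ = ⁅x, n⁆ ^ m * n := by
    intro m
    induction m with
    | zero => simp
    | succ m ih =>
      calc x ^ (m + 1) * n * (x ^ (m + 1))⁻¹
            = x * (x ^ m * n * (x ^ m)⁻¹) * x⁻¹ := by group
        _ = (x * ⁅x, n⁆ ^ m * x⁻¹) * (x * n * x⁻¹ * n⁻¹) * n := by rw [ih]; group
        _ = ⁅x, n⁆ ^ (m + 1) * n := by
          rw [(hxd.pow_right m).eq, mul_inv_cancel_right, pow_succ, commutatorElement_def]
  have hord : ⁅x, n⁆ ^ orderOf x = 1 := by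
    simpa [pow_orderOf_eq_one] using (hpow (orderOf x)).symm
  refine commutatorElement_eq_one_iff_commute.mp (eq_one_of_coprime_orderOf ?_ hd)
  exact Nat.Coprime.coprime_dvd_left (orderOf_dvd_of_pow_eq_one hord) hx

variable {S T : Subgroup G} {x : G}

theorem commutatorElement_mem_centralizer {n : G} (hxT : x ∈ centralizer (T : Set G))
    (hn : n ∈ normalizer (T : Set G)) : ⁅x, n⁆ ∈ centralizer (T : Set G) := by
  rw [mem_centralizer_iff] at hxT ⊢
  intro t ht
  have ht' : n⁻¹ * t * n ∈ T :=
    (mem_normalizer_iff.mp hn _).mpr (by simpa [mul_assoc] using ht)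
  have h1 := hxT t ht
  have h2 := hxT _ ht'
  rw [commutatorElement_def]
  calc t * (x * n * x⁻¹ * n⁻¹) = (t * x) * n * x⁻¹ * n⁻¹ := by group
    _ = x * n * x⁻¹ * (x * (n⁻¹ * t * n)) * x⁻¹ * n⁻¹ := by rw [h1]; group
    _ = x * n * x⁻¹ * n⁻¹ * t := by rw [← h2]; group

theorem mem_centralizer_inf_normalizer (hS : IsPGroup p S) (hx : (orderOf x).Coprime p)
    (hxS : x ∈ normalizer (S : Set G)) (hxT : x ∈ centralizer (T : Set G))
    (hCT : centralizer (T : Set G) ⊓ S ≤ T) :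
    x ∈ centralizer ((S ⊓ normalizer (T : Set G) : Subgroup G) : Set G) := by
  rw [mem_centralizer_iff]
  rintro n ⟨hnS, hnT⟩
  have hdS : ⁅x, n⁆ ∈ S := by
    rw [commutatorElement_def]
    exact S.mul_mem ((mem_normalizer_iff.mp hxS n).mp hnS) (S.inv_mem hnS)
  have hdT : ⁅x, n⁆ ∈ T := hCT ⟨commutatorElement_mem_centralizer hxT hnT, hdS⟩
  obtain ⟨k, hk⟩ := hS ⟨_, hdS⟩
  have hxd : Commute x ⁅x, n⁆ := (mem_centralizer_iff.mp hxT _ hdT).symm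
  exact (commute_of_commute_commutatorElement hx (by simpa using congrArg Subtype.val hk)
    hxd).symm.eq

variable [Fact p.Prime] [Finite G]

theorem IsPGroup.lt_inf_normalizer (hS : IsPGroup p S) (hTS : T < S) :
    T < S ⊓ normalizer (T : Set G) := by
  have := hS.isNilpotent
  have hlt : T.subgroupOf S < normalizer (T.subgroupOf S : Set S) :=
    Group.normalizerCondition_of_isNilpotent _ (by
      rw [lt_top_iff_ne_top, Ne, subgroupOf_eq_top]
      exact hTS.not_ge)
  rw [← subgroupOf_normalizer_eq hTS.le,
    ← map_lt_map_iff_of_injective S.subtype_injective, map_subgroupOf_eq_of_le hTS.le,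
    subgroupOf_map_subtype, inf_comm] at hlt
  exact hlt

theorem mem_centralizer_of_centralizer_inf_le (hS : IsPGroup p S) (hx : (orderOf x).Coprime p)
    (hxS : x ∈ normalizer (S : Set G)) (hTS : T ≤ S) (hxT : x ∈ centralizer (T : Set G))
    (hCT : centralizer (T : Set G) ⊓ S ≤ T) : x ∈ centralizer (S : Set G) := by
  induction T using WellFoundedGT.induction with
  | _ T ih =>
    rcases hTS.lt_or_eq with hlt | rfl
    · have hN := hS.lt_inf_normalizer hlt
      exact ih _ hN inf_le_left (mem_centralizer_inf_normalizer hS hx hxS hxT hCT)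
        ((inf_le_inf_right S (centralizer_le hN.le)).trans (hCT.trans hN.le))
    · exact hxT

end CoprimeAction

section PCore

variable {G : Type*} [Group G] {p : ℕ}

theorem IsPGroup.of_forall_coprime_orderOf_eq_one [Fact p.Prime] [Finite G]
    (h : ∀ g : G, (orderOf g).Coprime p → g = 1) : IsPGroup p G := by
  intro g
  refine ⟨(orderOf g).factorization p, h _ ?_⟩
  rw [orderOf_pow, Nat.gcd_eq_right (Nat.ordProj_dvd _ _)]
  exact (Nat.coprime_ordCompl Fact.out (isOfFinOrder_of_finite g).orderOf_pos.ne').symm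

theorem exists_isPCore [Fact p.Prime] [Finite G] : ∃ Q : Subgroup G, IsPCore p Q := by
  obtain ⟨S⟩ : Nonempty (Sylow p G) := inferInstance
  refine ⟨(S : Subgroup G).normalCore, normalCore_normal _,
    S.isPGroup'.to_le (normalCore_le _), fun Q hQ hQp => ?_⟩
  exact normal_le_normalCore.mpr (hQp.le_sylow_of_normal S)

theorem IsPCore.le_map_subtype {H : Subgroup G} {R : Subgroup H} (hR : IsPCore p R)
    {K : Subgroup G} (hK : IsPGroup p K) (hKH : K ≤ H) (hHK : H ≤ normalizer (K : Set G)) :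
    K ≤ R.map H.subtype := by
  rw [← map_subgroupOf_eq_of_le hKH]
  exact map_mono (hR.2.2 _ ((normal_subgroupOf_iff_le_normalizer hKH).mpr hHK) hK.comap_subtype)

theorem Subgroup.Normal.le_normalizer_map_subtype {H : Subgroup G} {R : Subgroup H}
    (hR : R.Normal) :
    H ≤ normalizer (R.map H.subtype : Set G) := by
  simpa [normalizer_eq_top_iff.mpr hR, ← MonoidHom.range_eq_map] using
    le_normalizer_map (H := R) H.subtype

theorem centralizer_le_of_isPCore [Fact p.Prime] [Finite G]
    (hchar : ∀ Q : Subgroup G, IsPCore p Q → centralizer (Q : Set G) ≤ Q)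
    {H : Subgroup G} {R : Subgroup H} (hR : IsPCore p R)
    (hRH : centralizer (R.map H.subtype : Set G) ≤ H) : centralizer (R : Set H) ≤ R := by
  set R' := R.map H.subtype
  obtain ⟨Q, hQ⟩ := exists_isPCore (p := p) (G := G)
  have : Q.Normal := hQ.1
  have : R.Normal := hR.1
  have hHR' : H ≤ normalizer (R' : Set G) := hR.1.le_normalizer_map_subtype
  have hSp : IsPGroup p ↥(Q ⊔ R') := hQ.2.1.to_sup_of_normal_left (hR.2.1.map _)
  have hHS : H ≤ normalizer ((Q ⊔ R' : Subgroup G) : Set G) := fun h hh =>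
    normalizer_inf_normalizer_le_normalizer_sup Q R' ⟨le_normalizer_of_normal hh, hHR' hh⟩
  have hCS : centralizer (R' : Set G) ⊓ (Q ⊔ R') ≤ R' := by
    refine hR.le_map_subtype (hSp.to_le inf_le_right) (inf_le_left.trans hRH) ?_
    refine (le_inf (hHR'.trans ?_) hHS).trans inf_normalizer_le_normalizer_inf
    exact le_normalizer_of_normal_subgroupOf (centralizer_le_normalizer _)
  refine hR.2.2 _ inferInstance (IsPGroup.of_forall_coprime_orderOf_eq_one fun c hc => ?_)
  have hcx : (orderOf ((c : H) : G)).Coprime p := by rwa [orderOf_coe, orderOf_coe]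
  have hxR' : ((c : H) : G) ∈ centralizer (R' : Set G) := by
    rintro _ ⟨r, hr, rfl⟩
    exact congrArg Subtype.val (mem_centralizer_iff.mp c.2 r hr)
  have hxS := mem_centralizer_of_centralizer_inf_le hSp hcx (hHS (c : H).2) le_sup_right hxR' hCS
  have hxQ : ((c : H) : G) ∈ Q := hchar Q hQ (centralizer_le (le_sup_left : Q ≤ Q ⊔ R') hxS)
  obtain ⟨k, hk⟩ := hQ.2.1 ⟨_, hxQ⟩
  exact Subtype.ext <| Subtype.ext <|
    eq_one_of_coprime_orderOf hcx (by simpa using congrArg Subtype.val hk)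

end PCore

theorem normalizer_char_p_of_char_p_general
    {G : Type*} [Group G] [Finite G] {p : ℕ} [Fact p.Prime]
    (hchar : ∀ P0 : Subgroup G, IsPCore p P0 → Subgroup.centralizer (P0 : Set G) ≤ P0)
    (P : Subgroup G) (hP : IsPGroup p ↥P) :
    ∀ R : Subgroup ↥(Subgroup.normalizer (P : Set G)), IsPCore p R →
      Subgroup.centralizer (R : Set ↥(Subgroup.normalizer (P : Set G))) ≤ R := by
  intro R hR
  refine centralizer_le_of_isPCore hchar hR ?_
  exact (centralizer_le (hR.le_map_subtype hP le_normalizer le_rfl)).trans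
    (centralizer_le_normalizer _)

/-- If a finite group `G` has characteristic `p` (i.e. `C_G(O_p(G)) ≤ O_p(G)`), then
for every nontrivial `p`-subgroup `P` of `G` the normalizer `N_G(P)` again has
characteristic `p`. -/
theorem normalizer_char_p_of_char_p
    {G : Type*} [Group G] [Finite G] {p : ℕ} [Fact p.Prime]
    (hchar : ∀ P0 : Subgroup G, IsPCore p P0 → Subgroup.centralizer (P0 : Set G) ≤ P0)
    (P : Subgroup G) (hP : IsPGroup p ↥P) (hPne : P ≠ ⊥) :
    ∀ R : Subgroup ↥(Subgroup.normalizer (P : Set G)), IsPCore p R →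
      Subgroup.centralizer (R : Set ↥(Subgroup.normalizer (P : Set G))) ≤ R :=
  normalizer_char_p_of_char_p_general hchar P hP
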